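/- For R ≥ 2, y ∈ [0,R], a > 0 and t > 0, the periodic reflected Green's function G̃_R(y,ξ,at) = Σ_{n∈ℤ} [Φ(y−ξ−2nR,at) − Φ(y+ξ−2nR,at)] satisfies ∫₀^R |G̃_R(y,ξ,at)| dξ ≤ 2 and ∫₀^R |∂_y G̃_R(y,ξ,at)| dξ ≤ 2√2/√(at). -/

import Mathlib

open MeasureTheory Real Set

/-- The 1D heat kernel `Φ(z,s) = (4πs)^{-1/2} exp(−z²/(4s))`. -/
noncomputable def Phi (z s : ℝ) : ℝ := (1 / Real.sqrt (4 * π * s)) * Real.exp (-z ^ 2 / (4 * s))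

/-- The reflected Green's function on `[0,R]` obtained by the method of images. -/
noncomputable def GtildeR (R y ξ s : ℝ) : ℝ :=
  ∑' n : ℤ, (Phi (y - ξ - 2 * n * R) s - Phi (y + ξ - 2 * n * R) s)

/-!
Bound `|G̃_R|` by the sum of the absolute values of all image terms. As `ξ` runs over `(0, R]`
and `n` over `ℤ`, the points `y ∓ ξ - 2nR` sweep out every point of `ℝ` exactly once, so
`∫₀^R |G̃_R(y,ξ,s)| dξ ≤ ∫_ℝ Φ(z,s) dz = 1`. The `y`-derivative of `G̃_R` is the image sum built
from `∂_zΦ` (term-by-term differentiation is licit because `Φ` and `∂_zΦ` decay exponentially,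
uniformly for `y` in bounded sets), and the same argument bounds `∫₀^R |∂_y G̃_R| dξ` by
`∫_ℝ |∂_zΦ| = 2 Φ(0,s) = (π s)^{-1/2}`.
-/

open Filter Topology

lemma integral_norm_tsum_le {α ι E : Type*} [MeasurableSpace α] {μ : Measure α} [Countable ι]
    [NormedAddCommGroup E] {F : ι → α → E}
    (hF : ∀ i, Integrable (F i) μ) (hF_sum : Summable fun i => ∫ a, ‖F i a‖ ∂μ) :
    ∫ a, ‖∑' i, F i a‖ ∂μ ≤ ∑' i, ∫ a, ‖F i a‖ ∂μ := by
  have hlin : ∫⁻ a, ‖∑' i, F i a‖ₑ ∂μ ≤ ENNReal.ofReal (∑' i, ∫ a, ‖F i a‖ ∂μ) :=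
    calc ∫⁻ a, ‖∑' i, F i a‖ₑ ∂μ ≤ ∫⁻ a, ∑' i, ‖F i a‖ₑ ∂μ :=
          lintegral_mono fun a => enorm_tsum_le_tsum_enorm
      _ = ∑' i, ∫⁻ a, ‖F i a‖ₑ ∂μ := lintegral_tsum fun i => (hF i).1.enorm
      _ = ENNReal.ofReal (∑' i, ∫ a, ‖F i a‖ ∂μ) := by
        rw [ENNReal.ofReal_tsum_of_nonneg (fun i => integral_nonneg fun a => norm_nonneg _) hF_sum]
        simp only [ofReal_integral_norm_eq_lintegral_enorm (hF _)]
  calc ∫ a, ‖∑' i, F i a‖ ∂μ ≤ (∫⁻ a, ENNReal.ofReal ‖‖∑' i, F i a‖‖ ∂μ).toReal :=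
        (Real.le_norm_self _).trans (norm_integral_le_lintegral_norm _)
    _ ≤ ∑' i, ∫ a, ‖F i a‖ ∂μ :=
        ENNReal.toReal_le_of_le_ofReal (tsum_nonneg fun i => integral_nonneg fun a => norm_nonneg _)
          (by simpa only [norm_norm, ofReal_norm] using hlin)

section Tiling

variable {E : Type*} [NormedAddCommGroup E] [NormedSpace ℝ E] {f : ℝ → E}

lemma hasSum_integral_Ioc_add_zsmul (hf : Integrable f) {p : ℝ} (hp : 0 < p) (a : ℝ) :
    HasSum (fun n : ℤ => ∫ x in Ioc (a + n • p) (a + (n + 1) • p), f x) (∫ x, f x) := by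
  have h := hasSum_integral_iUnion (fun n : ℤ => measurableSet_Ioc)
    (pairwise_disjoint_Ioc_add_zsmul a p) (μ := volume) (f := f)
  rw [iUnion_Ioc_add_zsmul hp a, Measure.restrict_univ] at h
  exact h hf.integrableOn

lemma integral_Ioc_comp_sub_add_comp_add (hf : Integrable f) {R : ℝ} (hR : 0 ≤ R) (c : ℝ) :
    ∫ ξ in Ioc 0 R, (f (c - ξ) + f (c + ξ)) = ∫ x in Ioc (c - R) (c + R), f x := by
  rw [← intervalIntegral.integral_of_le hR,
    intervalIntegral.integral_add (hf.comp_sub_left c).intervalIntegrable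
      (hf.comp_add_left c).intervalIntegrable,
    intervalIntegral.integral_comp_sub_left, intervalIntegral.integral_comp_add_left, sub_zero,
    add_zero, intervalIntegral.integral_add_adjacent_intervals hf.intervalIntegrable
      hf.intervalIntegrable, intervalIntegral.integral_of_le (by linarith)]

end Tiling

lemma integral_norm_tsum_images_le {E : Type*} [NormedAddCommGroup E] {g : ℝ → E}
    (hg : Integrable g) {R : ℝ} (hR : 0 < R) (y : ℝ) :
    ∫ ξ in Ioc 0 R, ‖∑' n : ℤ, (g (y - ξ - 2 * n * R) - g (y + ξ - 2 * n * R))‖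
      ≤ ∫ z, ‖g z‖ := by
  set c : ℤ → ℝ := fun n => y - 2 * n * R
  have hc : ∀ (n : ℤ) ξ, g (y - ξ - 2 * n * R) - g (y + ξ - 2 * n * R)
      = g (c n - ξ) - g (c n + ξ) := by
    intro n ξ
    simp only [c, sub_right_comm y ξ, add_sub_right_comm y ξ]
  simp only [hc]
  have htile : HasSum (fun n : ℤ => ∫ ξ in Ioc 0 R, (‖g (c n - ξ)‖ + ‖g (c n + ξ)‖))
      (∫ z, ‖g z‖) := by
    have hreindex :
        (fun n : ℤ => ∫ ξ in Ioc 0 R, (‖g (c n - ξ)‖ + ‖g (c n + ξ)‖)) ∘ Equiv.neg ℤ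
          = fun n : ℤ => ∫ x in Ioc (y - R + n • (2 * R)) (y - R + (n + 1) • (2 * R)), ‖g x‖ := by
      funext n
      rw [Function.comp_apply, integral_Ioc_comp_sub_add_comp_add hg.norm hR.le]
      simp only [c, Equiv.neg_apply, zsmul_eq_mul]
      congr 3 <;> push_cast <;> ring
    rw [← (Equiv.neg ℤ).hasSum_iff, hreindex]
    exact hasSum_integral_Ioc_add_zsmul hg.norm (by positivity) (y - R)
  have hint : ∀ n, Integrable (fun ξ => g (c n - ξ) - g (c n + ξ)) :=
    fun n => (hg.comp_sub_left (c n)).sub (hg.comp_add_left (c n))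
  have hle : ∀ n : ℤ, ∫ ξ in Ioc 0 R, ‖g (c n - ξ) - g (c n + ξ)‖
      ≤ ∫ ξ in Ioc 0 R, (‖g (c n - ξ)‖ + ‖g (c n + ξ)‖) := fun n =>
    integral_mono (hint n).integrableOn.norm
      ((hg.comp_sub_left _).norm.add (hg.comp_add_left _).norm).integrableOn
      fun ξ => norm_sub_le _ _
  have hsum := htile.summable.of_nonneg_of_le (fun n => integral_nonneg fun _ => norm_nonneg _) hle
  calc ∫ ξ in Ioc 0 R, ‖∑' n : ℤ, (g (c n - ξ) - g (c n + ξ))‖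
      ≤ ∑' n : ℤ, ∫ ξ in Ioc 0 R, ‖g (c n - ξ) - g (c n + ξ)‖ :=
        integral_norm_tsum_le (fun n => (hint n).integrableOn) hsum
    _ ≤ ∫ z, ‖g z‖ := htile.tsum_eq ▸ hsum.tsum_le_tsum hle htile.summable

def ExpDecay (g : ℝ → ℝ) : Prop := ∃ C, ∀ z, |g z| ≤ C * exp (-|z|)

lemma exp_neg_abs_sub_le (z c : ℝ) : exp (-|z - c|) ≤ exp |c| * exp (-|z|) := by
  rw [← exp_add, exp_le_exp]
  linarith [abs_sub_abs_le_abs_sub z c]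

lemma summable_exp_neg_abs_int_mul {w : ℝ} (hw : w ≠ 0) :
    Summable fun n : ℤ => exp (-|n * w|) := by
  have h : Summable fun n : ℕ => exp (n * -|w|) :=
    summable_exp_nat_mul_iff.2 (neg_neg_of_pos (abs_pos.2 hw))
  rw [summable_int_iff_summable_nat_and_neg]
  constructor <;> refine h.congr fun n => ?_ <;> simp [abs_mul]

namespace ExpDecay

variable {f g : ℝ → ℝ}

lemma comp_sub (hg : ExpDecay g) (c : ℝ) : ExpDecay fun z => g (z - c) := by
  obtain ⟨C, hC⟩ := hg
  have hC0 : 0 ≤ C := by simpa using (abs_nonneg _).trans (hC 0)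
  refine ⟨C * exp |c|, fun z => (hC _).trans ?_⟩
  rw [mul_assoc]
  gcongr
  exact exp_neg_abs_sub_le z c

lemma sub (hf : ExpDecay f) (hg : ExpDecay g) : ExpDecay fun z => f z - g z := by
  obtain ⟨C, hC⟩ := hf
  obtain ⟨D, hD⟩ := hg
  exact ⟨C + D, fun z => (abs_sub _ _).trans (by linarith [hC z, hD z])⟩

lemma exists_abs_comp_sub_le (hg : ExpDecay g) :
    ∃ C, ∀ x c, |g (x - c)| ≤ C * exp |x| * exp (-|c|) := by
  obtain ⟨C, hC⟩ := hg
  have hC0 : 0 ≤ C := by simpa using (abs_nonneg _).trans (hC 0)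
  refine ⟨C, fun x c => (hC _).trans ?_⟩
  rw [abs_sub_comm, mul_assoc]
  gcongr
  exact exp_neg_abs_sub_le c x

lemma summable_comp_sub_int_mul (hg : ExpDecay g) {w : ℝ} (hw : w ≠ 0) (x : ℝ) :
    Summable fun n : ℤ => g (x - n * w) := by
  obtain ⟨C, hC⟩ := hg.exists_abs_comp_sub_le
  exact ((summable_exp_neg_abs_int_mul hw).mul_left (C * exp |x|)).of_norm_bounded
    fun n => hC x _

lemma hasDerivAt_tsum_comp_sub_int_mul {g' : ℝ → ℝ} (hg : ExpDecay g) (hg' : ExpDecay g')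
    (hderiv : ∀ z, HasDerivAt g (g' z) z) {w : ℝ} (hw : w ≠ 0) (x : ℝ) :
    HasDerivAt (fun x => ∑' n : ℤ, g (x - n * w)) (∑' n : ℤ, g' (x - n * w)) x := by
  obtain ⟨C, hC⟩ := hg'.exists_abs_comp_sub_le
  have hC0 : 0 ≤ C := by simpa using (abs_nonneg _).trans (hC 0 0)
  have hbound : ∀ (n : ℤ), ∀ y ∈ Metric.ball x 1,
      ‖g' (y - n * w)‖ ≤ C * exp (|x| + 1) * exp (-|n * w|) := by
    intro n y hy
    have hxy : |y| ≤ |x| + 1 := by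
      have := abs_sub_abs_le_abs_sub y x
      rw [Metric.mem_ball, Real.dist_eq] at hy
      linarith
    refine (hC y _).trans ?_
    gcongr
  exact hasDerivAt_tsum_of_isPreconnected ((summable_exp_neg_abs_int_mul hw).mul_left _)
    Metric.isOpen_ball (convex_ball x 1).isPreconnected
    (fun n y _ => (hderiv _).comp_sub_const y _) hbound (Metric.mem_ball_self one_pos)
    (hg.summable_comp_sub_int_mul hw x) (Metric.mem_ball_self one_pos)

end ExpDecay

section HeatKernel

variable {s : ℝ}

lemma phi_nonneg (z s : ℝ) : 0 ≤ Phi z s := by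
  unfold Phi; positivity

lemma phi_eq_mul_exp_neg_mul_sq (z s : ℝ) :
    Phi z s = 1 / √(4 * π * s) * exp (-(4 * s)⁻¹ * z ^ 2) := by
  rw [Phi]
  congr 2
  ring

lemma integrable_phi (hs : 0 < s) : Integrable fun z => Phi z s := by
  simpa only [phi_eq_mul_exp_neg_mul_sq] using
    (integrable_exp_neg_mul_sq (by positivity : 0 < (4 * s)⁻¹)).const_mul _

lemma integral_phi (hs : 0 < s) : ∫ z, Phi z s = 1 := by
  simp only [phi_eq_mul_exp_neg_mul_sq]
  rw [integral_const_mul, integral_gaussian, div_inv_eq_mul,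
    show π * (4 * s) = 4 * π * s by ring, one_div, inv_mul_cancel₀ (by positivity)]

noncomputable def Phi' (z s : ℝ) : ℝ := -(z / (2 * s)) * Phi z s

lemma hasDerivAt_phi (z s : ℝ) : HasDerivAt (fun z => Phi z s) (Phi' z s) z := by
  have h := (((hasDerivAt_pow 2 z).neg.div_const (4 * s)).exp).const_mul (1 / √(4 * π * s))
  exact h.congr_deriv (by simp only [Phi', Phi, Pi.neg_apply]; ring)

lemma abs_phi' (hs : 0 < s) (z : ℝ) : |Phi' z s| = |z| / (2 * s) * Phi z s := by
  rw [Phi', abs_mul, abs_neg, abs_div, abs_of_pos (by positivity : 0 < 2 * s),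
    abs_of_nonneg (phi_nonneg z s)]

lemma neg_sq_div_le (hs : 0 < s) (k z : ℝ) : -z ^ 2 / (4 * s) ≤ k ^ 2 * s - k * |z| := by
  rw [div_le_iff₀ (by positivity), ← sq_abs z]
  nlinarith [sq_nonneg (|z| - 2 * k * s)]

lemma expDecay_phi (hs : 0 < s) : ExpDecay fun z => Phi z s := by
  refine ⟨1 / √(4 * π * s) * exp s, fun z => ?_⟩
  rw [abs_of_nonneg (phi_nonneg z s), Phi, mul_assoc (1 / _) (exp s), ← exp_add]
  gcongr
  linarith [neg_sq_div_le hs 1 z]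

lemma expDecay_phi' (hs : 0 < s) : ExpDecay fun z => Phi' z s := by
  refine ⟨1 / √(4 * π * s) / (2 * s) * exp (4 * s), fun z => ?_⟩
  have hz : |z| ≤ exp |z| := by linarith [add_one_le_exp |z|]
  have hexp : exp (-z ^ 2 / (4 * s)) ≤ exp (4 * s - 2 * |z|) := by
    rw [exp_le_exp]
    linarith [neg_sq_div_le hs 2 z]
  calc |Phi' z s| = 1 / √(4 * π * s) / (2 * s) * (|z| * exp (-z ^ 2 / (4 * s))) := by
        rw [abs_phi' hs, Phi]
        ring
    _ ≤ 1 / √(4 * π * s) / (2 * s) * (exp |z| * exp (4 * s - 2 * |z|)) := by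
        gcongr
    _ = 1 / √(4 * π * s) / (2 * s) * exp (4 * s) * exp (-|z|) := by
        rw [mul_assoc _ (exp (4 * s))]
        congr 1
        rw [← exp_add, ← exp_add]
        ring_nf

lemma integrable_phi' (hs : 0 < s) : Integrable fun z => Phi' z s := by
  have h := (integrable_mul_exp_neg_mul_sq (by positivity : 0 < (4 * s)⁻¹)).const_mul
    (-(1 / (2 * s)) * (1 / √(4 * π * s)))
  refine h.congr (Eventually.of_forall fun z => ?_)
  simp only [Phi', phi_eq_mul_exp_neg_mul_sq]
  ring

lemma tendsto_phi_atTop (hs : 0 < s) : Tendsto (fun z => Phi z s) atTop (𝓝 0) := by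
  simp only [phi_eq_mul_exp_neg_mul_sq]
  simpa using (tendsto_exp_atBot.comp ((tendsto_pow_atTop two_ne_zero).const_mul_atTop_of_neg
    (neg_lt_zero.2 (by positivity : 0 < (4 * s)⁻¹)))).const_mul (1 / √(4 * π * s))

lemma integral_abs_phi' (hs : 0 < s) : ∫ z, |Phi' z s| = 2 * Phi 0 s := by
  have habs : ∀ z, |Phi' z s| = -Phi' |z| s := by
    intro z
    rw [abs_phi' hs, Phi', Phi, Phi, sq_abs]
    ring
  have hIoi : ∫ z in Ioi 0, Phi' z s = 0 - Phi 0 s :=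
    integral_Ioi_of_hasDerivAt_of_nonpos' (fun z _ => hasDerivAt_phi z s)
      (fun z hz => by
        rw [Phi']
        exact mul_nonpos_of_nonpos_of_nonneg
          (neg_nonpos.2 (div_nonneg hz.le (by positivity))) (phi_nonneg z s))
      (tendsto_phi_atTop hs)
  simp only [habs]
  rw [integral_comp_abs (f := fun z => -Phi' z s), integral_neg, hIoi]
  ring

end HeatKernel

section ReflectedGreenFunction

variable {R s : ℝ}

lemma integral_abs_gtildeR_le (hR : 0 < R) (hs : 0 < s) (y : ℝ) :
    ∫ ξ in Ioc 0 R, |GtildeR R y ξ s| ≤ 1 := by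
  simpa only [GtildeR, Real.norm_eq_abs, abs_of_nonneg (phi_nonneg _ s), integral_phi hs] using
    integral_norm_tsum_images_le (integrable_phi hs) hR y

lemma hasDerivAt_gtildeR (hR : 0 < R) (hs : 0 < s) (y ξ : ℝ) :
    HasDerivAt (fun y' => GtildeR R y' ξ s)
      (∑' n : ℤ, (Phi' (y - ξ - 2 * n * R) s - Phi' (y + ξ - 2 * n * R) s)) y := by
  have h := ExpDecay.hasDerivAt_tsum_comp_sub_int_mul
    (((expDecay_phi hs).comp_sub ξ).sub ((expDecay_phi hs).comp_sub (-ξ)))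
    (((expDecay_phi' hs).comp_sub ξ).sub ((expDecay_phi' hs).comp_sub (-ξ)))
    (fun z => ((hasDerivAt_phi _ s).comp_sub_const z ξ).sub
      ((hasDerivAt_phi _ s).comp_sub_const z (-ξ)))
    (by positivity : 2 * R ≠ 0) y
  convert h using 1
  · funext y'
    exact tsum_congr fun n => by ring_nf
  · exact tsum_congr fun n => by ring_nf

lemma integral_abs_deriv_gtildeR_le (hR : 0 < R) (hs : 0 < s) (y : ℝ) :
    ∫ ξ in Ioc 0 R, |deriv (fun y' => GtildeR R y' ξ s) y| ≤ 2 * Phi 0 s := by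
  simp only [(hasDerivAt_gtildeR hR hs y _).deriv]
  simpa only [Real.norm_eq_abs, integral_abs_phi' hs] using
    integral_norm_tsum_images_le (integrable_phi' hs) hR y

lemma two_mul_phi_zero_le (hs : 0 < s) : 2 * Phi 0 s ≤ 2 * √2 / √s := by
  have hPhi0 : Phi 0 s = 1 / √(4 * π * s) := by simp [Phi]
  rw [hPhi0, mul_div_assoc]
  gcongr 2 * ?_
  calc 1 / √(4 * π * s) ≤ 1 / √s := by gcongr; nlinarith [pi_gt_three]
    _ ≤ √2 / √s := by gcongr; exact one_le_sqrt.2 one_le_two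

end ReflectedGreenFunction

theorem stmt16_general (R y a t : ℝ) (hR : 2 ≤ R)
    (ha : 0 < a) (ht : 0 < t) :
    (∫ ξ in Set.Ioc (0 : ℝ) R, |GtildeR R y ξ (a * t)|) ≤ 2 ∧
    (∫ ξ in Set.Ioc (0 : ℝ) R, |deriv (fun y' => GtildeR R y' ξ (a * t)) y|)
      ≤ 2 * Real.sqrt 2 / Real.sqrt (a * t) := by
  have hR0 : 0 < R := by linarith
  have hs : 0 < a * t := mul_pos ha ht
  exact ⟨(integral_abs_gtildeR_le hR0 hs y).trans one_le_two,
    (integral_abs_deriv_gtildeR_le hR0 hs y).trans (two_mul_phi_zero_le hs)⟩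

theorem stmt16 (R y a t : ℝ) (hR : 2 ≤ R) (hy : y ∈ Set.Icc (0 : ℝ) R)
    (ha : 0 < a) (ht : 0 < t) :
    (∫ ξ in Set.Ioc (0 : ℝ) R, |GtildeR R y ξ (a * t)|) ≤ 2 ∧
    (∫ ξ in Set.Ioc (0 : ℝ) R, |deriv (fun y' => GtildeR R y' ξ (a * t)) y|)
      ≤ 2 * Real.sqrt 2 / Real.sqrt (a * t) :=
  stmt16_general R y a t hR ha ht
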